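/- For m ≥ 1 and ν with mν > 1, and any l_n → ∞, the double sum Σ_{i=1}^n Σ_{j=1}^n 1/((i²+j²)^m + cn²)^ν is bounded above and below by constant multiples of (cn²)^{-ν+1/m}, uniformly for c ∈ [l_n/n², n^{2m-2}] as n → ∞. -/

import Mathlib

open Finset

/-!
Put `R = (c n²)^{1/(2m)}`; the range of `c` gives `1 ≤ R ≤ n`, and the claimed order is
`R^{2-2mν}`. For the lower bound, the `⌊R⌋² ≥ R²/4` terms with `i, j ≤ R` are each at least
`((2^m+1) R^{2m})^{-ν}`. For the upper bound, the term at `(i, j)` is at most `g (max i j)` with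
`g s ≤ min (R^{-2mν}) (s^{-2mν})`, at most `2s` pairs have maximum `s`, and `∑ s g s` splits at
`⌊R⌋` into a head of size `⌊R⌋² R^{-2mν}` and a tail bounded by `∫_{⌊R⌋}^∞ x^{1-2mν} dx`.
-/

open Real

theorem half_le_natFloor {R : ℝ} (hR : 1 ≤ R) : R / 2 ≤ ⌊R⌋₊ := by
  have hfloor := Nat.lt_floor_add_one R
  have hM1 : (1 : ℝ) ≤ ⌊R⌋₊ := by exact_mod_cast Nat.le_floor (by exact_mod_cast hR)
  linarith

theorem exists_rpow_eq_of_one_le_of_le_rpow {p A x : ℝ} (hp : 0 < p) (hA : 1 ≤ A) (hx : 0 ≤ x)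
    (hAx : A ≤ x ^ p) : ∃ R, 1 ≤ R ∧ R ≤ x ∧ R ^ p = A := by
  refine ⟨A ^ p⁻¹, one_le_rpow hA (by positivity), ?_, rpow_inv_rpow (by linarith) hp.ne'⟩
  calc A ^ p⁻¹ ≤ (x ^ p) ^ p⁻¹ := rpow_le_rpow (by linarith) hAx (by positivity)
    _ = x := rpow_rpow_inv hx hp.ne'

theorem sum_Ioc_rpow_neg_le {p : ℝ} (hp : 1 < p) {M : ℕ} (hM : 1 ≤ M) (n : ℕ) :
    ∑ s ∈ Ioc M n, (s : ℝ) ^ (-p) ≤ (M : ℝ) ^ (1 - p) / (p - 1) := by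
  rcases le_or_gt M n with hMn | hnM
  · have hM0 : (0 : ℝ) < M := by exact_mod_cast hM
    have hanti : AntitoneOn (fun x : ℝ => x ^ (-p)) (Set.Icc (M : ℝ) n) :=
      (antitoneOn_rpow_Ioi_of_exponent_nonpos (by linarith)).mono fun x hx => hM0.trans_le hx.1
    have h0 : (0 : ℝ) ∉ Set.uIcc (M : ℝ) n := by
      rw [Set.uIcc_of_le (by exact_mod_cast hMn)]
      exact fun h => hM0.not_ge h.1
    have hsum := hanti.sum_le_integral_Ico hMn
    rw [integral_rpow (Or.inr ⟨by linarith, h0⟩)] at hsum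
    have hn0 : 0 ≤ (n : ℝ) ^ (-p + 1) := by positivity
    calc ∑ s ∈ Ioc M n, (s : ℝ) ^ (-p) = ∑ i ∈ Ico M n, ((i + 1 : ℕ) : ℝ) ^ (-p) := by
          rw [sum_Ico_add' (fun s : ℕ => (s : ℝ) ^ (-p)), Ico_add_one_add_one_eq_Ioc]
      _ ≤ ((n : ℝ) ^ (-p + 1) - (M : ℝ) ^ (-p + 1)) / (-p + 1) := hsum
      _ = ((M : ℝ) ^ (1 - p) - (n : ℝ) ^ (-p + 1)) / (p - 1) := by
          rw [neg_add_eq_sub, ← neg_sub p 1, div_neg, ← neg_div, neg_sub]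
      _ ≤ (M : ℝ) ^ (1 - p) / (p - 1) := div_le_div_of_nonneg_right (by linarith) (by linarith)
  · rw [Ioc_eq_empty_of_le hnM.le, sum_empty]
    exact div_nonneg (by positivity) (by linarith)

theorem sum_Icc_sum_Icc_max_le {g : ℕ → ℝ} (hg : ∀ s, 0 ≤ g s) (n : ℕ) :
    ∑ i ∈ Icc 1 n, ∑ j ∈ Icc 1 n, g (max i j) ≤ 2 * ∑ s ∈ Icc 1 n, s * g s := by
  have hmax : ∀ i j, g (max i j) ≤ (if j ≤ i then g i else 0) + (if i ≤ j then g j else 0) := by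
    intro i j
    rcases le_total j i with h | h
    · rw [max_eq_left h, if_pos h]
      exact le_add_of_nonneg_right (ite_nonneg (hg j) le_rfl)
    · rw [max_eq_right h, if_pos h]
      exact le_add_of_nonneg_left (ite_nonneg (hg i) le_rfl)
  have hhalf : ∑ i ∈ Icc 1 n, ∑ j ∈ Icc 1 n, (if j ≤ i then g i else 0) ≤
      ∑ s ∈ Icc 1 n, s * g s := by
    refine sum_le_sum fun i _ => ?_
    rw [← sum_filter, sum_const, nsmul_eq_mul]
    gcongr
    · exact hg i
    · have hsub : {j ∈ Icc 1 n | j ≤ i} ⊆ Icc 1 i := by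
        intro j
        simp only [mem_filter, mem_Icc]
        omega
      exact_mod_cast (card_le_card hsub).trans (by simp)
  calc ∑ i ∈ Icc 1 n, ∑ j ∈ Icc 1 n, g (max i j)
      ≤ ∑ i ∈ Icc 1 n, ∑ j ∈ Icc 1 n,
          ((if j ≤ i then g i else 0) + (if i ≤ j then g j else 0)) := by
        gcongr with i _ j _
        exact hmax i j
    _ = ∑ i ∈ Icc 1 n, ∑ j ∈ Icc 1 n, (if j ≤ i then g i else 0) +
          ∑ j ∈ Icc 1 n, ∑ i ∈ Icc 1 n, (if i ≤ j then g j else 0) := by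
        simp only [sum_add_distrib]
        exact congrArg _ sum_comm
    _ ≤ 2 * ∑ s ∈ Icc 1 n, s * g s := by linarith

theorem sum_Ioc_natFloor_mul_le {q R : ℝ} (hq : 2 < q) (hR : 1 ≤ R) {g : ℕ → ℝ}
    (hgs : ∀ s, 1 ≤ s → g s ≤ (s : ℝ) ^ (-q)) (n : ℕ) :
    ∑ s ∈ Ioc ⌊R⌋₊ n, s * g s ≤ 2 ^ (q - 2) / (q - 2) * R ^ (2 - q) := by
  have hM1 : 1 ≤ ⌊R⌋₊ := Nat.le_floor (by exact_mod_cast hR)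
  calc ∑ s ∈ Ioc ⌊R⌋₊ n, s * g s ≤ ∑ s ∈ Ioc ⌊R⌋₊ n, (s : ℝ) ^ (-(q - 1)) := by
        refine sum_le_sum fun s hs => ?_
        have hs1 : 1 ≤ s := hM1.trans (mem_Ioc.mp hs).1.le
        have hs0 : (0 : ℝ) < s := by exact_mod_cast hs1
        calc (s : ℝ) * g s ≤ s * (s : ℝ) ^ (-q) := by gcongr; exact hgs s hs1
          _ = (s : ℝ) ^ (-(q - 1)) := by
              rw [neg_sub, sub_eq_neg_add, rpow_add hs0, rpow_one, mul_comm]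
    _ ≤ (⌊R⌋₊ : ℝ) ^ (1 - (q - 1)) / (q - 1 - 1) :=
        sum_Ioc_rpow_neg_le (p := q - 1) (by linarith) hM1 _
    _ ≤ (R / 2) ^ (2 - q) / (q - 2) := by
        rw [show 1 - (q - 1) = 2 - q by ring, show q - 1 - 1 = q - 2 by ring]
        exact div_le_div_of_nonneg_right
          (rpow_le_rpow_of_nonpos (by positivity) (half_le_natFloor hR) (by linarith))
          (by linarith)
    _ = 2 ^ (q - 2) / (q - 2) * R ^ (2 - q) := by
        have h2 : (2 : ℝ) ^ (2 - q) = (2 ^ (q - 2))⁻¹ := by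
          rw [← rpow_neg zero_le_two, neg_sub]
        rw [div_rpow (by linarith) zero_le_two, h2, div_inv_eq_mul]
        ring

theorem sum_Icc_mul_le_of_le_rpow_neg {q R : ℝ} (hq : 2 < q) (hR : 1 ≤ R) {g : ℕ → ℝ}
    (hg : ∀ s, 0 ≤ g s) (hgR : ∀ s, g s ≤ R ^ (-q))
    (hgs : ∀ s, 1 ≤ s → g s ≤ (s : ℝ) ^ (-q)) (n : ℕ) :
    ∑ s ∈ Icc 1 n, s * g s ≤ (1 + 2 ^ (q - 2) / (q - 2)) * R ^ (2 - q) := by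
  set M := ⌊R⌋₊
  have hR0 : 0 < R := by linarith
  have hMR : (M : ℝ) ≤ R := Nat.floor_le hR0.le
  have hhead : ∑ s ∈ Ioc 0 M, s * g s ≤ R ^ (2 - q) := by
    calc ∑ s ∈ Ioc 0 M, s * g s ≤ ∑ s ∈ Ioc 0 M, (M : ℝ) * R ^ (-q) := by
          gcongr with s hs
          · exact hg s
          · exact_mod_cast (mem_Ioc.mp hs).2
          · exact hgR s
      _ = M * M * R ^ (-q) := by simp [mul_assoc]
      _ ≤ R ^ 2 * R ^ (-q) := by rw [sq]; gcongr
      _ = R ^ (2 - q) := by rw [sub_eq_add_neg, rpow_add hR0, rpow_two]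
  calc ∑ s ∈ Icc 1 n, s * g s ≤ ∑ s ∈ Ioc 0 (max M n), s * g s := by
        rw [← Icc_add_one_left_eq_Ioc]
        exact sum_le_sum_of_subset_of_nonneg (Icc_subset_Icc_right (le_max_right _ _))
          fun s _ _ => mul_nonneg (Nat.cast_nonneg s) (hg s)
    _ = ∑ s ∈ Ioc 0 M, s * g s + ∑ s ∈ Ioc M (max M n), s * g s :=
        (sum_Ioc_consecutive _ (Nat.zero_le M) (le_max_left M n)).symm
    _ ≤ (1 + 2 ^ (q - 2) / (q - 2)) * R ^ (2 - q) := by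
        linarith [sum_Ioc_natFloor_mul_le hq hR hgs (max M n)]

theorem one_div_rpow_add_le_of_le {m ν A x y : ℝ} (hm : 0 ≤ m) (hν : 0 ≤ ν) (hA : 0 < A)
    (hx : 0 ≤ x) (hxy : x ≤ y) : 1 / (y ^ m + A) ^ ν ≤ 1 / (x ^ m + A) ^ ν := by
  gcongr

theorem one_div_rpow_le_rpow_neg {ν a b : ℝ} (hν : 0 ≤ ν) (ha : 0 < a) (hab : a ≤ b) :
    1 / b ^ ν ≤ a ^ (-ν) := by
  rw [rpow_neg ha.le, ← one_div]
  gcongr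

theorem sq_rpow {x : ℝ} (hx : 0 ≤ x) (m : ℝ) : (x ^ 2) ^ m = x ^ (2 * m) := by
  rw [← rpow_natCast_mul hx, Nat.cast_ofNat]

section LatticeSum

variable {m ν R : ℝ}

theorem sum_Icc_sum_Icc_one_div_le_rpow (hm : 0 < m) (hmν : 1 < m * ν) (hR : 1 ≤ R) (n : ℕ) :
    ∑ i ∈ Icc 1 n, ∑ j ∈ Icc 1 n, 1 / (((i : ℝ) ^ 2 + (j : ℝ) ^ 2) ^ m + R ^ (2 * m)) ^ ν ≤
      2 * (1 + 2 ^ (2 * m * ν - 2) / (2 * m * ν - 2)) * R ^ (2 - 2 * m * ν) := by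
  have hν : 0 ≤ ν := (pos_of_mul_pos_right (by linarith) hm.le).le
  have hR0 : 0 < R := by linarith
  set g : ℕ → ℝ := fun s => 1 / (((s : ℝ) ^ 2) ^ m + R ^ (2 * m)) ^ ν
  have hg : ∀ s, 0 ≤ g s := fun s => by positivity
  have hgR : ∀ s, g s ≤ R ^ (-(2 * m * ν)) := fun s =>
    (one_div_rpow_le_rpow_neg hν (by positivity) (le_add_of_nonneg_left (by positivity))).trans_eq
      (by rw [← rpow_mul hR0.le, mul_neg])
  have hgs : ∀ s, 1 ≤ s → g s ≤ (s : ℝ) ^ (-(2 * m * ν)) := fun s hs => by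
    have hs0 : (0 : ℝ) < s := by exact_mod_cast hs
    refine (one_div_rpow_le_rpow_neg hν (by positivity)
      (le_add_of_nonneg_right (by positivity))).trans_eq ?_
    rw [sq_rpow hs0.le, ← rpow_mul hs0.le, mul_neg]
  have hmax : ∀ i j : ℕ, ((max i j : ℕ) : ℝ) ^ 2 ≤ (i : ℝ) ^ 2 + (j : ℝ) ^ 2 := by
    intro i j
    rcases le_total i j with h | h
    · rw [max_eq_right h]
      exact le_add_of_nonneg_left (by positivity)
    · rw [max_eq_left h]
      exact le_add_of_nonneg_right (by positivity)
  calc ∑ i ∈ Icc 1 n, ∑ j ∈ Icc 1 n, 1 / (((i : ℝ) ^ 2 + (j : ℝ) ^ 2) ^ m + R ^ (2 * m)) ^ ν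
      ≤ ∑ i ∈ Icc 1 n, ∑ j ∈ Icc 1 n, g (max i j) := by
        gcongr with i _ j _
        exact one_div_rpow_add_le_of_le hm.le hν (by positivity) (by positivity) (hmax i j)
    _ ≤ 2 * ∑ s ∈ Icc 1 n, s * g s := sum_Icc_sum_Icc_max_le hg n
    _ ≤ 2 * (1 + 2 ^ (2 * m * ν - 2) / (2 * m * ν - 2)) * R ^ (2 - 2 * m * ν) := by
        rw [mul_assoc]
        gcongr
        exact sum_Icc_mul_le_of_le_rpow_neg (by linarith) hR hg hgR hgs n

theorem rpow_le_sum_Icc_sum_Icc_one_div (hm : 0 < m) (hν : 0 ≤ ν) (hR : 1 ≤ R) {n : ℕ}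
    (hRn : R ≤ n) :
    (2 ^ m + 1) ^ (-ν) / 4 * R ^ (2 - 2 * m * ν) ≤
      ∑ i ∈ Icc 1 n, ∑ j ∈ Icc 1 n, 1 / (((i : ℝ) ^ 2 + (j : ℝ) ^ 2) ^ m + R ^ (2 * m)) ^ ν := by
  set M := ⌊R⌋₊
  have hR0 : 0 < R := by linarith
  have hMR : (M : ℝ) ≤ R := Nat.floor_le hR0.le
  have hRM : R / 2 ≤ M := half_le_natFloor hR
  have hMn : M ≤ n := Nat.floor_le_of_le hRn
  set b := (2 ^ m + 1) ^ (-ν) * R ^ (-(2 * m * ν))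
  have hterm : ∀ i ∈ Icc 1 M, ∀ j ∈ Icc 1 M,
      b ≤ 1 / (((i : ℝ) ^ 2 + (j : ℝ) ^ 2) ^ m + R ^ (2 * m)) ^ ν := by
    intro i hi j hj
    have hiR : (i : ℝ) ≤ R := le_trans (by exact_mod_cast (mem_Icc.mp hi).2) hMR
    have hjR : (j : ℝ) ≤ R := le_trans (by exact_mod_cast (mem_Icc.mp hj).2) hMR
    calc b = 1 / (((2 : ℝ) * R ^ 2) ^ m + R ^ (2 * m)) ^ ν := by
          rw [mul_rpow zero_le_two (by positivity), sq_rpow hR0.le, ← add_one_mul,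
            one_div, ← rpow_neg (by positivity), mul_rpow (by positivity) (by positivity),
            ← rpow_mul hR0.le, mul_neg]
      _ ≤ _ := one_div_rpow_add_le_of_le hm.le hν (by positivity) (by positivity) (by nlinarith)
  calc (2 ^ m + 1) ^ (-ν) / 4 * R ^ (2 - 2 * m * ν) = (R / 2) * (R / 2) * b := by
        rw [sub_eq_add_neg, rpow_add hR0, rpow_two]
        ring
    _ ≤ M * M * b := by gcongr
    _ = ∑ i ∈ Icc 1 M, ∑ j ∈ Icc 1 M, b := by simp [mul_assoc]
    _ ≤ ∑ i ∈ Icc 1 M, ∑ j ∈ Icc 1 M,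
          1 / (((i : ℝ) ^ 2 + (j : ℝ) ^ 2) ^ m + R ^ (2 * m)) ^ ν := by
        gcongr with i hi j hj
        exact hterm i hi j hj
    _ ≤ _ := by
        have hsub : Icc 1 M ⊆ Icc 1 n := Icc_subset_Icc_right hMn
        refine (sum_le_sum fun i _ =>
          sum_le_sum_of_subset_of_nonneg hsub fun j _ _ => by positivity).trans ?_
        exact sum_le_sum_of_subset_of_nonneg hsub fun i _ _ => sum_nonneg fun j _ => by positivity

end LatticeSum

/-- Two-dimensional sum comparison: for `m ≥ 1`, `mν > 1`, and any `l_n → ∞`,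
the double sum `Σ_i Σ_j 1/((i²+j²)^m + cn²)^ν` is of exact order
`(cn²)^{-ν+1/m}`, uniformly for `c ∈ [l_n/n², n^{2m-2}]`, for large `n`. -/
theorem double_sum_sobolev_comparison
    (m ν : ℝ) (hm : 1 ≤ m) (hν : 1 < m * ν)
    (l : ℕ → ℝ) (hl : Filter.Tendsto l Filter.atTop Filter.atTop) :
    ∃ k K : ℝ, 0 < k ∧ k ≤ K ∧ ∃ N : ℕ, ∀ n : ℕ, N ≤ n → ∀ c : ℝ,
      l n / (n : ℝ) ^ 2 ≤ c → c ≤ (n : ℝ) ^ (2 * m - 2) →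
      k * (c * (n : ℝ) ^ 2) ^ (-ν + 1 / m) ≤
        (∑ i ∈ Finset.Icc 1 n, ∑ j ∈ Finset.Icc 1 n,
          1 / (((i : ℝ) ^ 2 + (j : ℝ) ^ 2) ^ m + c * (n : ℝ) ^ 2) ^ ν) ∧
      (∑ i ∈ Finset.Icc 1 n, ∑ j ∈ Finset.Icc 1 n,
          1 / (((i : ℝ) ^ 2 + (j : ℝ) ^ 2) ^ m + c * (n : ℝ) ^ 2) ^ ν) ≤
        K * (c * (n : ℝ) ^ 2) ^ (-ν + 1 / m) := by
  have hm0 : 0 < m := by linarith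
  have hν0 : 0 ≤ ν := (pos_of_mul_pos_right (by linarith) hm0.le).le
  have hk : (2 ^ m + 1 : ℝ) ^ (-ν) ≤ 1 :=
    rpow_le_one_of_one_le_of_nonpos (by linarith [one_le_rpow one_le_two hm0.le]) (by linarith)
  have hK : (0 : ℝ) ≤ 2 ^ (2 * m * ν - 2) / (2 * m * ν - 2) :=
    div_nonneg (by positivity) (by linarith)
  refine ⟨(2 ^ m + 1) ^ (-ν) / 4, 2 * (1 + 2 ^ (2 * m * ν - 2) / (2 * m * ν - 2)),
    by positivity, by linarith, ?_⟩
  obtain ⟨N, hN⟩ := Filter.eventually_atTop.mp (hl.eventually_ge_atTop 1)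
  refine ⟨max N 1, fun n hn c hc hc' => ?_⟩
  have hn0 : (0 : ℝ) < n := by exact_mod_cast le_of_max_le_right hn
  have hA : 1 ≤ c * (n : ℝ) ^ 2 :=
    (hN n (le_of_max_le_left hn)).trans ((div_le_iff₀ (by positivity)).mp hc)
  have hAn : c * (n : ℝ) ^ 2 ≤ (n : ℝ) ^ (2 * m) := by
    calc c * (n : ℝ) ^ 2 ≤ (n : ℝ) ^ (2 * m - 2) * (n : ℝ) ^ (2 : ℝ) := by
          rw [rpow_two]
          exact mul_le_mul_of_nonneg_right hc' (by positivity)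
      _ = (n : ℝ) ^ (2 * m) := by rw [← rpow_add hn0, sub_add_cancel]
  obtain ⟨R, hR, hRn, hRA⟩ := exists_rpow_eq_of_one_le_of_le_rpow (by positivity) hA hn0.le hAn
  have hexp : (R ^ (2 * m)) ^ (-ν + 1 / m) = R ^ (2 - 2 * m * ν) := by
    rw [← rpow_mul (by positivity)]
    congr 1
    field_simp
    ring
  rw [← hRA, hexp]
  exact ⟨rpow_le_sum_Icc_sum_Icc_one_div hm0 hν0 hR hRn,
    sum_Icc_sum_Icc_one_div_le_rpow hm0 hν hR n⟩
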